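/- Hoffman's bound: for any graph G with at least one edge, with adjacency matrix A having eigenvalues μ₁ ≥ ... ≥ μₙ, the chromatic number satisfies χ(G) ≥ 1 + μ₁/|μₙ|. -/

import Mathlib

open Matrix BigOperators

lemma quad_repr {n : ℕ} {A : Matrix (Fin n) (Fin n) ℝ} (hA : A.IsHermitian) (y : Fin n → ℝ) :
    ∃ z : Fin n → ℝ, y ⬝ᵥ (A *ᵥ y) = ∑ i, hA.eigenvalues i * (z i * z i) ∧
      y ⬝ᵥ y = ∑ i, z i * z i := by
  set U : Matrix (Fin n) (Fin n) ℝ := (hA.eigenvectorUnitary : Matrix (Fin n) (Fin n) ℝ) with hU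
  have hUU : U * star U = 1 := (Matrix.mem_unitaryGroup_iff).mp hA.eigenvectorUnitary.2
  refine ⟨star U *ᵥ y, ?_, ?_⟩
  · have hvm : y ᵥ* U = star U *ᵥ y := by
      ext i
      simp [Matrix.vecMul, Matrix.mulVec, dotProduct, mul_comm]
    conv_lhs => rw [hA.spectral_theorem, Unitary.conjStarAlgAut_apply]
    rw [← hU, ← Matrix.mulVec_mulVec, Matrix.dotProduct_mulVec, ← Matrix.vecMul_vecMul, hvm]
    simp [dotProduct, Matrix.vecMul_diagonal, Finset.mul_sum, mul_comm, mul_assoc,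
      mul_left_comm]
  · have hvm : (star U *ᵥ y) ᵥ* star U = U *ᵥ (star U *ᵥ y) := by
      ext i
      simp [Matrix.vecMul, Matrix.mulVec, dotProduct, mul_comm]
    calc y ⬝ᵥ y = ((U * star U) *ᵥ y) ⬝ᵥ y := by rw [hUU]; simp
    _ = ∑ i, (star U *ᵥ y) i * (star U *ᵥ y) i := by
        rw [← Matrix.mulVec_mulVec, ← hvm, ← Matrix.dotProduct_mulVec]
        simp [dotProduct]

lemma quad_lower {n : ℕ} {A : Matrix (Fin n) (Fin n) ℝ} (hA : A.IsHermitian) {m : ℝ}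
    (hm : ∀ i, m ≤ hA.eigenvalues i) (y : Fin n → ℝ) :
    m * (y ⬝ᵥ y) ≤ y ⬝ᵥ (A *ᵥ y) := by
  obtain ⟨z, h1, h2⟩ := quad_repr hA y
  rw [h1, h2, Finset.mul_sum]
  exact Finset.sum_le_sum fun i _ =>
    mul_le_mul_of_nonneg_right (hm i) (mul_self_nonneg (z i))

/-- Hoffman's bound: for a graph with at least one edge,
`χ(G) ≥ 1 + μ₁ / |μₙ|`, where `μ₁` and `μₙ` are the largest and smallest adjacency
eigenvalues. -/
theorem stmt8 {n : ℕ} (hn : 0 < n) (G : SimpleGraph (Fin n)) [DecidableRel G.Adj]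
    (hedge : ∃ v w, G.Adj v w)
    (hA : (G.adjMatrix ℝ).IsHermitian)
    (μ : Fin n → ℝ) (σ : Equiv.Perm (Fin n))
    (hμ : μ = hA.eigenvalues ∘ σ) (hμanti : Antitone μ) :
    1 + μ ⟨0, hn⟩ / |μ ⟨n - 1, by omega⟩| ≤ (G.chromaticNumber.toNat : ℝ) := by
  classical
  obtain ⟨v, w, hvw⟩ := hedge
  have hvne : v ≠ w := G.ne_of_adj hvw
  set i0 : Fin n := ⟨0, hn⟩ with hi0
  set iN : Fin n := ⟨n - 1, by omega⟩ with hiN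
  set μ1 : ℝ := μ i0 with hμ1
  set μm : ℝ := μ iN with hμm
  -- μ1 is the largest and μm the smallest eigenvalue
  have heig : ∀ i, hA.eigenvalues i = μ (σ.symm i) := by
    intro i; rw [hμ]; simp
  have hmax : ∀ i, hA.eigenvalues i ≤ μ1 := by
    intro i; rw [heig, hμ1]
    exact hμanti (by rw [Fin.le_def]; exact Nat.zero_le _)
  have hmin : ∀ i, μm ≤ hA.eigenvalues i := by
    intro i; rw [heig, hμm]
    apply hμanti
    rw [Fin.le_def]
    have := (σ.symm i).isLt
    simp only [hiN]
    omega
  -- instance for single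
  have : NeZero n := ⟨by omega⟩
  -- μm < 0
  have hμmneg : μm < 0 := by
    set y : Fin n → ℝ := Pi.single v 1 - Pi.single w 1 with hy
    have h1 : y ⬝ᵥ y = 2 := by
      simp [hy, sub_dotProduct, dotProduct_sub, single_dotProduct,
        Pi.single_apply, hvne, hvne.symm]
      norm_num
    have h2 : y ⬝ᵥ (G.adjMatrix ℝ *ᵥ y) = -2 := by
      have hAvv : G.adjMatrix ℝ v v = 0 := by simp
      have hAww : G.adjMatrix ℝ w w = 0 := by simp
      have hAvw : G.adjMatrix ℝ v w = 1 := by simp [hvw]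
      have hAwv : G.adjMatrix ℝ w v = 1 := by simp [hvw.symm]
      simp only [hy, Matrix.mulVec_sub, Matrix.mulVec_single, dotProduct_sub,
        sub_dotProduct, single_dotProduct]
      simp [hvw, hvw.symm, hvne, hvne.symm]
      norm_num
    have := quad_lower hA hmin y
    rw [h1, h2] at this
    linarith
  -- the coloring
  set k : ℕ := G.chromaticNumber.toNat with hk
  obtain ⟨C⟩ := G.colorable_chromaticNumber_of_fintype
  have hk2 : 2 ≤ k := by
    by_contra h
    push_neg at h
    have h1 := (C v).isLt
    have h2 := (C w).isLt
    exact C.valid hvw (Fin.ext (by omega))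
  -- the top eigenvector
  set x : Fin n → ℝ := ⇑(hA.eigenvectorBasis (σ i0)) with hx
  have hval : hA.eigenvalues (σ i0) = μ1 := by rw [hμ1, hμ]; rfl
  have hAx : G.adjMatrix ℝ *ᵥ x = μ1 • x := by
    rw [hx, hA.mulVec_eigenvectorBasis, hval]
  have hxx : x ⬝ᵥ x = 1 := by
    have h := hA.eigenvectorBasis.orthonormal.1 (σ i0)
    have h2 : @inner ℝ _ _ (hA.eigenvectorBasis (σ i0)) (hA.eigenvectorBasis (σ i0)) = (1 : ℝ) := by
      rw [real_inner_self_eq_norm_sq, h]; norm_num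
    rw [PiLp.inner_apply] at h2
    simpa [dotProduct, hx, ← pow_two] using h2
  -- color class restrictions
  set z : Fin k → Fin n → ℝ := fun j u => if C u = j then x u else 0 with hz
  set s : Fin k → ℝ := fun j => z j ⬝ᵥ z j with hs
  have hzx : ∀ j, z j ⬝ᵥ x = s j := by
    intro j
    simp only [hs, hz, dotProduct]
    apply Finset.sum_congr rfl
    intro u _
    by_cases h : C u = j <;> simp [h]
  have hxz : ∀ j, x ⬝ᵥ z j = s j := by
    intro j
    rw [← hzx j, dotProduct_comm]
  have hsum : ∑ j, s j = 1 := by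
    rw [← hxx]
    simp only [hs, hz, dotProduct]
    rw [Finset.sum_comm]
    apply Finset.sum_congr rfl
    intro u _
    rw [Finset.sum_eq_single (C u)] <;> simp +contextual [eq_comm]
  have hzAz : ∀ j, z j ⬝ᵥ (G.adjMatrix ℝ *ᵥ z j) = 0 := by
    intro j
    have hexp : z j ⬝ᵥ (G.adjMatrix ℝ *ᵥ z j)
        = ∑ u, ∑ t, z j u * (G.adjMatrix ℝ u t * z j t) := by
      simp [dotProduct, Matrix.mulVec, Finset.mul_sum]
    rw [hexp]
    apply Finset.sum_eq_zero
    intro u _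
    apply Finset.sum_eq_zero
    intro t _
    by_cases hu : C u = j
    · by_cases ht : C t = j
      · have hAut : G.adjMatrix ℝ u t = 0 := by
          simp only [SimpleGraph.adjMatrix_apply, ite_eq_right_iff]
          intro hadj
          exact absurd (hu.trans ht.symm) (C.valid hadj)
        rw [hAut]; ring
      · simp [hz, ht]
    · simp [hz, hu]
  have hzAx : ∀ j, z j ⬝ᵥ (G.adjMatrix ℝ *ᵥ x) = μ1 * s j := by
    intro j
    rw [hAx, dotProduct_smul, smul_eq_mul, hzx]
  have hxAz : ∀ j, x ⬝ᵥ (G.adjMatrix ℝ *ᵥ z j) = μ1 * s j := by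
    intro j
    have hsym : x ᵥ* G.adjMatrix ℝ = G.adjMatrix ℝ *ᵥ x := by
      rw [← Matrix.mulVec_transpose, SimpleGraph.transpose_adjMatrix]
    rw [Matrix.dotProduct_mulVec, hsym, hAx, smul_dotProduct, smul_eq_mul, hxz]
  have hxAx : x ⬝ᵥ (G.adjMatrix ℝ *ᵥ x) = μ1 := by
    rw [hAx, dotProduct_smul, smul_eq_mul, hxx, mul_one]
  set K : ℝ := (k : ℝ) with hK
  -- the key inequality per color class
  have key : ∀ j, μm * (1 - 2 * K * s j + K ^ 2 * s j) ≤ μ1 - 2 * K * μ1 * s j := by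
    intro j
    set y : Fin n → ℝ := x - K • z j with hy
    have h1 : y ⬝ᵥ y = 1 - 2 * K * s j + K ^ 2 * s j := by
      simp only [hy, sub_dotProduct, dotProduct_sub, smul_dotProduct,
        dotProduct_smul, smul_eq_mul, hxx, hxz, hzx]
      simp only [hs]
      ring
    have h2 : y ⬝ᵥ (G.adjMatrix ℝ *ᵥ y) = μ1 - 2 * K * μ1 * s j := by
      simp only [hy, Matrix.mulVec_sub, Matrix.mulVec_smul, sub_dotProduct,
        dotProduct_sub, smul_dotProduct, dotProduct_smul, smul_eq_mul,
        hxAx, hxAz, hzAx, hzAz]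
      ring
    have := quad_lower hA hmin y
    rw [h1, h2] at this
    exact this
  -- sum over color classes
  have hsum2 : μm * (K ^ 2 - K) ≤ - (K * μ1) := by
    have hle : ∑ j : Fin k, μm * (1 - 2 * K * s j + K ^ 2 * s j)
        ≤ ∑ j : Fin k, (μ1 - 2 * K * μ1 * s j) :=
      Finset.sum_le_sum fun j _ => key j
    have hone : ∑ _j : Fin k, (1 : ℝ) = K := by
      simp [hK]
    have hL : ∑ j : Fin k, μm * (1 - 2 * K * s j + K ^ 2 * s j)
        = μm * (K - 2 * K + K ^ 2) := by
      rw [← Finset.mul_sum]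
      congr 1
      have hptw : ∀ j : Fin k, 1 - 2 * K * s j + K ^ 2 * s j
          = 1 + (K ^ 2 - 2 * K) * s j := fun j => by ring
      simp_rw [hptw]
      rw [Finset.sum_add_distrib, ← Finset.mul_sum, hsum, hone]
      ring
    have hR : ∑ j : Fin k, (μ1 - 2 * K * μ1 * s j) = K * μ1 - 2 * K * μ1 := by
      rw [Finset.sum_sub_distrib]
      rw [← Finset.mul_sum, hsum, Finset.sum_const, Finset.card_univ, Fintype.card_fin,
        nsmul_eq_mul, mul_one]
    rw [hL, hR] at hle
    nlinarith [hle]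
  have hK2 : (2 : ℝ) ≤ K := by rwa [hK, show (2:ℝ) = ((2:ℕ):ℝ) from by norm_num, Nat.cast_le]
  -- conclude
  have habs : |μm| = -μm := abs_of_neg hμmneg
  rw [habs]
  have hdiv : μ1 / (-μm) ≤ K - 1 := by
    rw [div_le_iff₀ (by linarith)]
    nlinarith [hsum2]
  calc 1 + μ1 / (-μm) ≤ 1 + (K - 1) := by linarith
    _ = K := by ring
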